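/- Let k be a field, Q a finite quiver without oriented cycles, and let I, J ⊆ (kQ)_{≥2} be two-sided ideals of the path algebra kQ. Then the quotient algebras kQ/I and kQ/J are isomorphic as k^{Q₀}-algebras if and only if there exists a k^{Q₀}-algebra automorphism g of kQ with g(I) = J. -/

import Mathlib

/-- A finite quiver on a vertex set `V`: a family of finite types of arrows `Arrow i j`
from `i` to `j`. -/
structure FinQuiver (V : Type) where
  Arrow : V → V → Type
  [fintypeArrow : ∀ i j, Fintype (Arrow i j)]

attribute [instance] FinQuiver.fintypeArrow

/-- Paths in a finite quiver: `QPath Q i j` is the type of paths from `i` to `j`. -/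
inductive QPath {V : Type} (Q : FinQuiver V) : V → V → Type
  | nil (i : V) : QPath Q i i
  | cons {i j l : V} (p : QPath Q i j) (a : Q.Arrow j l) : QPath Q i l

namespace QPath

variable {V : Type} {Q : FinQuiver V}

/-- The length (number of arrows) of a path. -/
def length : ∀ {i j : V}, QPath Q i j → ℕ
  | _, _, nil _ => 0
  | _, _, cons p _ => length p + 1

/-- Concatenation of paths. -/
def comp : ∀ {i j l : V}, QPath Q i j → QPath Q j l → QPath Q i l
  | _, _, _, p, nil _ => p
  | _, _, _, p, cons q a => cons (comp p q) a

/-- Transport a path along equalities of its endpoints. -/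
def cast {i j i' j' : V} (hi : i = i') (hj : j = j') (p : QPath Q i j) : QPath Q i' j' := by
  subst hi; subst hj; exact p

end QPath

/-- The quiver `Q` has no oriented cycles: every path from a vertex to itself has
length zero. -/
def FinQuiver.NoCycles {V : Type} (Q : FinQuiver V) : Prop :=
  ∀ (i : V) (p : QPath Q i i), p.length = 0

/-- A realization of the `k`-algebra `A` as the path algebra of the quiver `Q`:
a `k`-basis indexed by the paths of `Q`, such that basis vectors multiply by
concatenation of composable paths (and give `0` for non-composable paths), and such
that the sum of the length-zero paths is `1`.  The basis vector of a path lying in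
`e_i (kQ) e_j` is indexed by the corresponding path from `j` to `i`. -/
structure PathAlgStructure (k : Type) [CommRing k] {V : Type} [Fintype V] [DecidableEq V]
    (Q : FinQuiver V) (A : Type) [Ring A] [Algebra k A] where
  basis : Module.Basis (Σ i : V, Σ j : V, QPath Q i j) k A
  basis_mul : ∀ {a b c d : V} (p : QPath Q a b) (q : QPath Q c d),
    basis ⟨c, d, q⟩ * basis ⟨a, b, p⟩ =
      if h : b = c then basis ⟨a, d, p.comp (q.cast h.symm rfl)⟩ else 0
  one_def : (1 : A) = ∑ i : V, basis ⟨i, i, QPath.nil i⟩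

namespace PathAlgStructure

variable {k : Type} [CommRing k] {V : Type} [Fintype V] [DecidableEq V]
  {Q : FinQuiver V} {A : Type} [Ring A] [Algebra k A]

/-- The idempotent `e_i` of the path algebra: the length-zero path at the vertex `i`. -/
noncomputable def idem (ps : PathAlgStructure k Q A) (i : V) : A :=
  ps.basis ⟨i, i, QPath.nil i⟩

/-- `(kQ)_{≥ n}`: the span of the paths of length at least `n`. -/
def degreeGE (ps : PathAlgStructure k Q A) (n : ℕ) : Submodule k A :=
  Submodule.span k {x | ∃ (i j : V) (p : QPath Q i j), n ≤ p.length ∧ x = ps.basis ⟨i, j, p⟩}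

/-- `e_i (kQ) e_j`: the span of the paths from `j` to `i`. -/
def pathSpan (ps : PathAlgStructure k Q A) (i j : V) : Submodule k A :=
  Submodule.span k {x | ∃ p : QPath Q j i, x = ps.basis ⟨j, i, p⟩}

/-- `V_{ij}^{prim}`: the span of the arrows from `j` to `i`. -/
def arrowSpan (ps : PathAlgStructure k Q A) (i j : V) : Submodule k A :=
  Submodule.span k {x | ∃ a : Q.Arrow j i, x = ps.basis ⟨j, i, (QPath.nil j).cons a⟩}

/-- `V_{ij}^{nonprim} = e_i (kQ)_{≥2} e_j`: the span of the paths from `j` to `i`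
of length at least two. -/
def nonprimSpan (ps : PathAlgStructure k Q A) (i j : V) : Submodule k A :=
  Submodule.span k {x | ∃ p : QPath Q j i, 2 ≤ p.length ∧ x = ps.basis ⟨j, i, p⟩}

end PathAlgStructure

/-- A bundled unital associative `k`-algebra. -/
structure AlgPkg (k : Type) [CommRing k] where
  carrier : Type
  [instRing : Ring carrier]
  [instAlgebra : Algebra k carrier]

attribute [instance] AlgPkg.instRing AlgPkg.instAlgebra

/-!
Given presentations `f, g : kQ → B` with kernels `I` and `J`, lift the `f`-image of each arrow
along `g`, cut down by the vertex idempotents, to get an endomorphism `σ` of `kQ` with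
`g ∘ σ = f`; symmetrically `τ` with `f ∘ τ = g`. Then `τ ∘ σ` fixes the vertices and moves each
arrow by an element of `I ⊆ (kQ)_{≥2}`, so `τ ∘ σ - 1` raises path length. Without oriented
cycles all paths have length `< |Q₀|`, so `τ ∘ σ` is unipotent, hence bijective, and likewise
`σ ∘ τ`. Thus `σ` is an automorphism with `σ(ker f) = ker g`. Conversely, the quotient map
`kQ → kQ/J` precomposed with `σ` has kernel `σ⁻¹(J) = I`.
-/

namespace QPath

variable {V : Type} {Q : FinQuiver V}

abbrev ofArrow {i j : V} (a : Q.Arrow i j) : QPath Q i j := (nil i).cons a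

@[simp] lemma cast_self {i j : V} (hi : i = i) (hj : j = j) (p : QPath Q i j) :
    p.cast hi hj = p := rfl

@[simp] lemma comp_nil {i j : V} (p : QPath Q i j) : p.comp (nil j) = p := by rw [comp]

@[simp] lemma comp_cons {i j l m : V} (p : QPath Q i j) (q : QPath Q j l) (a : Q.Arrow l m) :
    p.comp (cons q a) = cons (p.comp q) a := by rw [comp]

@[simp] lemma nil_comp {i j : V} (p : QPath Q i j) : (nil i).comp p = p := by
  induction p with
  | nil => rw [comp]
  | cons p a ih => rw [comp, ih]

@[simp] lemma length_nil (i : V) : (nil (Q := Q) i).length = 0 := by rw [length]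

@[simp] lemma length_cons {i j l : V} (p : QPath Q i j) (a : Q.Arrow j l) :
    (cons p a).length = p.length + 1 := by rw [length]

@[simp] lemma length_comp {i j l : V} (p : QPath Q i j) (q : QPath Q j l) :
    (p.comp q).length = p.length + q.length := by
  induction q with
  | nil => simp
  | cons q a ih => simp [ih, Nat.add_assoc]

@[simp] lemma length_cast {i j i' j' : V} (hi : i = i') (hj : j = j') (p : QPath Q i j) :
    (p.cast hi hj).length = p.length := by
  subst hi hj; rfl

def vertices : ∀ {i j : V}, QPath Q i j → List V
  | i, _, nil _ => [i]
  | _, l, cons p _ => vertices p ++ [l]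

lemma length_vertices {i j : V} (p : QPath Q i j) : p.vertices.length = p.length + 1 := by
  induction p with
  | nil => simp [vertices]
  | cons p a ih => simp [vertices, ih]

lemma nonempty_of_mem_vertices {i j v : V} (p : QPath Q i j) (hv : v ∈ p.vertices) :
    Nonempty (QPath Q v j) := by
  induction p with
  | nil => simp only [vertices, List.mem_singleton] at hv; exact hv ▸ ⟨nil v⟩
  | cons p a ih =>
    simp only [vertices, List.mem_append, List.mem_singleton] at hv
    rcases hv with hv | rfl
    · exact ⟨cons (ih hv).some a⟩
    · exact ⟨nil v⟩

lemma nodup_vertices (hQ : Q.NoCycles) {i j : V} (p : QPath Q i j) : p.vertices.Nodup := by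
  induction p with
  | nil => simp [vertices]
  | cons p a ih =>
    rw [vertices]
    refine List.nodup_append.2 ⟨ih, List.nodup_singleton _, ?_⟩
    intro v hv b hb hvb
    obtain rfl := List.mem_singleton.1 hb
    subst hvb
    obtain ⟨q⟩ := nonempty_of_mem_vertices p hv
    simpa using hQ _ (cons q a)

lemma length_lt_card [Fintype V] (hQ : Q.NoCycles) {i j : V} (p : QPath Q i j) :
    p.length < Fintype.card V := by
  rw [Nat.lt_iff_add_one_le, ← length_vertices]
  exact (nodup_vertices hQ p).length_le_card

section Eval

variable {B : Type*} [Ring B] (e : V → B) (x : ∀ i j, Q.Arrow i j → B)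

/-- Sandwiching `x a` between idempotents makes `PathAlgStructure.lift` an algebra map for
arbitrary `x`. -/
def eval : ∀ {i j : V}, QPath Q i j → B
  | i, _, nil _ => e i
  | _, l, cons p a => e l * x _ _ a * eval p

@[simp] lemma eval_nil (i : V) : (nil (Q := Q) i).eval e x = e i := by rw [eval]

@[simp] lemma eval_cons {i j l : V} (p : QPath Q i j) (a : Q.Arrow j l) :
    (cons p a).eval e x = e l * x j l a * p.eval e x := by rw [eval]

variable {e}

lemma idem_mul_eval (he : ∀ i, IsIdempotentElem (e i)) {i j : V} (p : QPath Q i j) :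
    e j * p.eval e x = p.eval e x := by
  cases p with
  | nil => rw [eval_nil]; exact (he _).eq
  | cons p a => rw [eval_cons, ← mul_assoc, ← mul_assoc, (he _).eq]

lemma eval_mul_eval [DecidableEq V] (he : OrthogonalIdempotents e) {a b c d : V}
    (p : QPath Q a b) (q : QPath Q c d) :
    q.eval e x * p.eval e x = if h : b = c then (p.comp (q.cast h.symm rfl)).eval e x else 0 := by
  induction q with
  | nil =>
    by_cases h : b = c
    · subst h; simpa using idem_mul_eval x he.idem p
    · rw [dif_neg h, eval_nil, ← idem_mul_eval x he.idem p, ← mul_assoc, he.ortho (Ne.symm h),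
        zero_mul]
  | cons q α ih =>
    rw [eval_cons, mul_assoc, ih]
    by_cases h : b = c
    · subst h; simp
    · rw [dif_neg h, dif_neg h, mul_zero]

end Eval

end QPath

namespace PathAlgStructure

variable {k : Type} [CommRing k] {V : Type} [Fintype V] [DecidableEq V]
  {Q : FinQuiver V} {A : Type} [Ring A] [Algebra k A] (ps : PathAlgStructure k Q A)

lemma idem_mul_basis {i j : V} (p : QPath Q i j) :
    ps.idem j * ps.basis ⟨i, j, p⟩ = ps.basis ⟨i, j, p⟩ := by
  simpa [idem] using ps.basis_mul p (QPath.nil j)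

lemma basis_mul_idem {i j : V} (p : QPath Q i j) :
    ps.basis ⟨i, j, p⟩ * ps.idem i = ps.basis ⟨i, j, p⟩ := by
  simpa [idem] using ps.basis_mul (QPath.nil i) p

lemma basis_cons {i j l : V} (p : QPath Q i j) (a : Q.Arrow j l) :
    ps.basis ⟨i, l, p.cons a⟩ = ps.basis ⟨j, l, .ofArrow a⟩ * ps.basis ⟨i, j, p⟩ := by
  simpa using (ps.basis_mul p (.ofArrow a)).symm

lemma completeOrthogonalIdempotents_idem : CompleteOrthogonalIdempotents ps.idem where
  idem i := by simpa [idem, IsIdempotentElem] using ps.basis_mul (QPath.nil i) (QPath.nil i)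
  ortho i j hij := by simpa [idem, Ne.symm hij] using ps.basis_mul (QPath.nil j) (QPath.nil i)
  complete := ps.one_def.symm

lemma algHom_ext {B : Type*} [Semiring B] [Algebra k B] {f g : A →ₐ[k] B}
    (hidem : ∀ i, f (ps.idem i) = g (ps.idem i))
    (harrow : ∀ i j (a : Q.Arrow i j),
      f (ps.basis ⟨i, j, .ofArrow a⟩) = g (ps.basis ⟨i, j, .ofArrow a⟩)) :
    f = g := by
  apply AlgHom.toLinearMap_injective
  refine ps.basis.ext fun ⟨i, j, p⟩ => ?_
  simp only [AlgHom.toLinearMap_apply]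
  induction p with
  | nil => exact hidem _
  | cons p a ih => rw [basis_cons, map_mul, map_mul, harrow, ih]

section Lift

variable {B : Type*} [Ring B] [Algebra k B] (e : V → B) (x : ∀ i j, Q.Arrow i j → B)

noncomputable def liftₗ : A →ₗ[k] B :=
  ps.basis.constr k fun s => s.2.2.eval e x

@[simp] lemma liftₗ_basis {i j : V} (p : QPath Q i j) :
    ps.liftₗ e x (ps.basis ⟨i, j, p⟩) = p.eval e x :=
  ps.basis.constr_basis k _ ⟨i, j, p⟩

variable {e} (he : CompleteOrthogonalIdempotents e)

include he

lemma liftₗ_one : ps.liftₗ e x 1 = 1 := by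
  simp [ps.one_def, he.complete]

lemma liftₗ_mul (z w : A) : ps.liftₗ e x (z * w) = ps.liftₗ e x z * ps.liftₗ e x w := by
  suffices (LinearMap.mul k A).compr₂ (ps.liftₗ e x) =
      (LinearMap.mul k B).compl₁₂ (ps.liftₗ e x) (ps.liftₗ e x) from
    LinearMap.congr_fun₂ this z w
  refine ps.basis.ext fun ⟨a, b, p⟩ => ps.basis.ext fun ⟨c, d, q⟩ => ?_
  simp only [LinearMap.compr₂_apply, LinearMap.compl₁₂_apply, LinearMap.mul_apply',
    liftₗ_basis, ps.basis_mul q p, QPath.eval_mul_eval x he.toOrthogonalIdempotents q p]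
  split_ifs <;> simp

noncomputable def lift : A →ₐ[k] B :=
  AlgHom.ofLinearMap (ps.liftₗ e x) (ps.liftₗ_one x he) (ps.liftₗ_mul x he)

@[simp] lemma lift_basis {i j : V} (p : QPath Q i j) :
    ps.lift x he (ps.basis ⟨i, j, p⟩) = p.eval e x :=
  ps.liftₗ_basis e x p

@[simp] lemma lift_idem (i : V) : ps.lift x he (ps.idem i) = e i :=
  (ps.lift_basis x he (QPath.nil i)).trans (QPath.eval_nil e x i)

end Lift

lemma exists_algHom_comp_eq {B : Type*} [Ring B] [Algebra k B] (f g : A →ₐ[k] B)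
    (hg : Function.Surjective g) (hfg : ∀ i, f (ps.idem i) = g (ps.idem i)) :
    ∃ σ : A →ₐ[k] A, (∀ i, σ (ps.idem i) = ps.idem i) ∧ g.comp σ = f := by
  choose u hu using fun i j (a : Q.Arrow i j) => hg (f (ps.basis ⟨i, j, .ofArrow a⟩))
  refine ⟨ps.lift u ps.completeOrthogonalIdempotents_idem, ps.lift_idem u _, ps.algHom_ext ?_ ?_⟩
  · intro i
    simp [hfg]
  · intro i j a
    rw [AlgHom.comp_apply, lift_basis, QPath.eval_cons, QPath.eval_nil, map_mul, map_mul, hu,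
      ← hfg, ← hfg, ← map_mul, ← map_mul, idem_mul_basis, basis_mul_idem]

section Grading

lemma basis_mem_degreeGE {i j : V} (p : QPath Q i j) {n : ℕ} (h : n ≤ p.length) :
    ps.basis ⟨i, j, p⟩ ∈ ps.degreeGE n :=
  Submodule.subset_span ⟨i, j, p, h, rfl⟩

lemma degreeGE_zero : ps.degreeGE 0 = ⊤ := by
  rw [eq_top_iff, ← ps.basis.span_eq]
  exact Submodule.span_mono fun _ ⟨⟨i, j, p⟩, hx⟩ => ⟨i, j, p, Nat.zero_le _, hx.symm⟩

lemma degreeGE_antitone : Antitone ps.degreeGE :=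
  fun _ _ h => Submodule.span_mono fun _ ⟨i, j, p, hp, hx⟩ => ⟨i, j, p, h.trans hp, hx⟩

lemma degreeGE_mul_le (m n : ℕ) : ps.degreeGE m * ps.degreeGE n ≤ ps.degreeGE (m + n) := by
  rw [degreeGE, degreeGE, Submodule.span_mul_span, Submodule.span_le]
  rintro _ ⟨_, ⟨i, j, p, hp, rfl⟩, _, ⟨c, d, q, hq, rfl⟩, rfl⟩
  change ps.basis ⟨i, j, p⟩ * ps.basis ⟨c, d, q⟩ ∈ _
  rw [ps.basis_mul q p]
  split_ifs
  · exact ps.basis_mem_degreeGE _ (by simp only [QPath.length_comp, QPath.length_cast]; omega)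
  · exact Submodule.zero_mem _

lemma mul_mem_degreeGE {m n r : ℕ} {x y : A} (hx : x ∈ ps.degreeGE m) (hy : y ∈ ps.degreeGE n)
    (hr : r ≤ m + n) : x * y ∈ ps.degreeGE r :=
  ps.degreeGE_antitone hr (ps.degreeGE_mul_le m n (Submodule.mul_mem_mul hx hy))

lemma degreeGE_card_eq_bot (hQ : Q.NoCycles) : ps.degreeGE (Fintype.card V) = ⊥ := by
  rw [degreeGE, Submodule.span_eq_bot]
  rintro _ ⟨i, j, p, hp, rfl⟩
  exact absurd hp (QPath.length_lt_card hQ p).not_ge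

lemma isNilpotent_of_mapsTo_degreeGE_succ (hQ : Q.NoCycles) (N : Module.End k A)
    (hN : ∀ n, ∀ z ∈ ps.degreeGE n, N z ∈ ps.degreeGE (n + 1)) : IsNilpotent N := by
  have hpow : ∀ m z, (N ^ m) z ∈ ps.degreeGE m := by
    intro m
    induction m with
    | zero => simp [degreeGE_zero]
    | succ m ih => exact fun z => by rw [pow_succ', Module.End.mul_apply]; exact hN m _ (ih z)
  refine ⟨Fintype.card V, LinearMap.ext fun z => ?_⟩
  simpa [ps.degreeGE_card_eq_bot hQ] using hpow (Fintype.card V) z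

end Grading

section Unipotent

variable {ps} {ρ : A →ₐ[k] A} (hρe : ∀ i, ρ (ps.idem i) = ps.idem i)
  (hρa : ∀ i j (a : Q.Arrow i j),
    ρ (ps.basis ⟨i, j, .ofArrow a⟩) - ps.basis ⟨i, j, .ofArrow a⟩ ∈ ps.degreeGE 2)

include hρe hρa

lemma map_basis_sub_mem_degreeGE {i j : V} (p : QPath Q i j) :
    ρ (ps.basis ⟨i, j, p⟩) - ps.basis ⟨i, j, p⟩ ∈ ps.degreeGE (p.length + 1) := by
  induction p with
  | nil =>
    change ρ (ps.idem i) - ps.idem i ∈ _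
    rw [hρe, sub_self]
    exact zero_mem _
  | @cons m l p a ih =>
    set α := ps.basis ⟨m, l, .ofArrow a⟩
    set π := ps.basis ⟨i, m, p⟩
    have hα : α ∈ ps.degreeGE 1 := ps.basis_mem_degreeGE _ (by simp)
    have hπ : π ∈ ps.degreeGE p.length := ps.basis_mem_degreeGE _ le_rfl
    rw [basis_cons, map_mul, QPath.length_cons,
      show ρ α * ρ π - α * π = α * (ρ π - π) + (ρ α - α) * π + (ρ α - α) * (ρ π - π) by
        noncomm_ring]
    refine add_mem (add_mem ?_ ?_) ?_
    · exact ps.mul_mem_degreeGE hα ih (by omega)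
    · exact ps.mul_mem_degreeGE (hρa m l a) hπ (by omega)
    · exact ps.mul_mem_degreeGE (hρa m l a) ih (by omega)

lemma map_sub_mem_degreeGE_succ {n : ℕ} {z : A} (hz : z ∈ ps.degreeGE n) :
    ρ z - z ∈ ps.degreeGE (n + 1) := by
  induction hz using Submodule.span_induction with
  | mem w hw =>
    obtain ⟨i, j, p, hp, rfl⟩ := hw
    exact ps.degreeGE_antitone (by omega) (map_basis_sub_mem_degreeGE hρe hρa p)
  | zero => simp
  | add u v _ _ hu hv => simpa [add_sub_add_comm] using add_mem hu hv
  | smul c u _ hu => simpa [← smul_sub] using Submodule.smul_mem _ c hu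

/-- `ρ - 1` raises path length, and `(kQ)_{≥ |Q₀|} = 0`, so `ρ` is unipotent. -/
lemma bijective_of_map_arrow_sub_mem (hQ : Q.NoCycles) : Function.Bijective ρ := by
  have hN : IsNilpotent (ρ.toLinearMap - 1) :=
    ps.isNilpotent_of_mapsTo_degreeGE_succ hQ _ fun n z hz => map_sub_mem_degreeGE_succ hρe hρa hz
  have hu : IsUnit ρ.toLinearMap := by
    simpa using hN.isUnit_one_add
  exact (Module.End.isUnit_iff _).1 hu

end Unipotent

lemma bijective_of_comp_eq_self (hQ : Q.NoCycles) {B : Type*} [Ring B] [Algebra k B]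
    {f : A →ₐ[k] B} (hf : ∀ x, f x = 0 → x ∈ ps.degreeGE 2) {ρ : A →ₐ[k] A}
    (hρe : ∀ i, ρ (ps.idem i) = ps.idem i) (hρ : f.comp ρ = f) : Function.Bijective ρ :=
  bijective_of_map_arrow_sub_mem hρe (fun i j a => hf _ (by
    rw [map_sub, ← AlgHom.comp_apply, hρ, sub_self])) hQ

lemma exists_algEquiv_comp_eq (hQ : Q.NoCycles) {B : Type*} [Ring B] [Algebra k B]
    (f g : A →ₐ[k] B) (hf : Function.Surjective f) (hg : Function.Surjective g)
    (hfg : ∀ i, f (ps.idem i) = g (ps.idem i))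
    (hfker : ∀ x, f x = 0 → x ∈ ps.degreeGE 2) (hgker : ∀ x, g x = 0 → x ∈ ps.degreeGE 2) :
    ∃ σ : A ≃ₐ[k] A, (∀ i, σ (ps.idem i) = ps.idem i) ∧ g.comp σ = f := by
  obtain ⟨σ, hσe, hσ⟩ := ps.exists_algHom_comp_eq f g hg hfg
  obtain ⟨τ, hτe, hτ⟩ := ps.exists_algHom_comp_eq g f hf fun i => (hfg i).symm
  have hτσ : Function.Bijective (τ.comp σ) := ps.bijective_of_comp_eq_self hQ hfker
    (fun i => by simp [hσe, hτe]) (by rw [← AlgHom.comp_assoc, hτ, hσ])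
  have hστ : Function.Bijective (σ.comp τ) := ps.bijective_of_comp_eq_self hQ hgker
    (fun i => by simp [hσe, hτe]) (by rw [← AlgHom.comp_assoc, hσ, hτ])
  exact ⟨AlgEquiv.ofBijective σ ⟨hτσ.1.of_comp (f := τ), hστ.2.of_comp (f := σ)⟩, hσe, hσ⟩

end PathAlgStructure

lemma exists_algHom_surjective_ker_eq {k : Type} [CommRing k] {A : Type} [Ring A] [Algebra k A]
    (J : Submodule k A) (hJ : ∀ a : A, ∀ x ∈ J, a * x ∈ J ∧ x * a ∈ J) :
    ∃ (B : AlgPkg k) (g : A →ₐ[k] B.carrier), Function.Surjective g ∧ ∀ x, g x = 0 ↔ x ∈ J := by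
  let T : TwoSidedIdeal A := .mk' J J.zero_mem J.add_mem J.neg_mem
    (fun hy => (hJ _ _ hy).1) (fun hx => (hJ _ _ hx).2)
  refine ⟨⟨A ⧸ T.asIdeal⟩, Ideal.Quotient.mkₐ k T.asIdeal, Ideal.Quotient.mkₐ_surjective k _,
    fun x => ?_⟩
  rw [Ideal.Quotient.mkₐ_eq_mk, Ideal.Quotient.eq_zero_iff_mem, TwoSidedIdeal.mem_asIdeal,
    TwoSidedIdeal.mem_mk', SetLike.mem_coe]

theorem quotients_isomorphic_iff_exists_automorphism_general (k : Type) [Field k]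
    (V : Type) [Fintype V] [DecidableEq V] (Q : FinQuiver V)
    (A : Type) [Ring A] [Algebra k A] (ps : PathAlgStructure k Q A)
    (hQ : Q.NoCycles)
    (I J : Submodule k A)
    (hJ : ∀ a : A, ∀ x ∈ J, a * x ∈ J ∧ x * a ∈ J)
    (hIle : I ≤ ps.degreeGE 2) (hJle : J ≤ ps.degreeGE 2) :
    (∃ (B : AlgPkg k) (f g : A →ₐ[k] B.carrier),
        Function.Surjective f ∧ Function.Surjective g ∧
        (∀ x : A, f x = 0 ↔ x ∈ I) ∧ (∀ x : A, g x = 0 ↔ x ∈ J) ∧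
        ∀ i : V, f (ps.idem i) = g (ps.idem i)) ↔
      ∃ σ : A ≃ₐ[k] A, (∀ i : V, σ (ps.idem i) = ps.idem i) ∧
        Submodule.map σ.toLinearMap I = J := by
  constructor
  · rintro ⟨B, f, g, hf, hg, hfI, hgJ, hfg⟩
    obtain ⟨σ, hσe, hσ⟩ := ps.exists_algEquiv_comp_eq hQ f g hf hg hfg
      (fun x hx => hIle ((hfI x).1 hx)) (fun x hx => hJle ((hgJ x).1 hx))
    refine ⟨σ, hσe, SetLike.ext fun y => ?_⟩
    obtain ⟨z, rfl⟩ := σ.surjective y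
    simp [← hfI, ← hgJ, ← hσ]
  · rintro ⟨σ, hσe, rfl⟩
    obtain ⟨B, g, hg, hgJ⟩ := exists_algHom_surjective_ker_eq _ hJ
    refine ⟨B, g.comp σ.toAlgHom, g, hg.comp σ.surjective, hg, fun x => ?_, hgJ,
      fun i => by simp [hσe]⟩
    simp [hgJ]

/-- Let `Q` be a finite quiver without oriented cycles and `I, J ⊆ (kQ)_{≥2}` two-sided
ideals of the path algebra `kQ`.  Then `kQ/I` and `kQ/J` are isomorphic as
`k^{Q₀}`-algebras (expressed by the existence of a common quotient presentation: a
`k`-algebra `B` with surjections `f, g : kQ → B` with kernels `I` and `J` matching up the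
idempotents) if and only if there is a `k^{Q₀}`-algebra automorphism `σ` of `kQ` (a
`k`-algebra automorphism fixing each idempotent `e_i`) with `σ(I) = J`. -/
theorem quotients_isomorphic_iff_exists_automorphism (k : Type) [Field k]
    (V : Type) [Fintype V] [DecidableEq V] (Q : FinQuiver V)
    (A : Type) [Ring A] [Algebra k A] (ps : PathAlgStructure k Q A)
    (hQ : Q.NoCycles)
    (I J : Submodule k A)
    (hI : ∀ a : A, ∀ x ∈ I, a * x ∈ I ∧ x * a ∈ I)
    (hJ : ∀ a : A, ∀ x ∈ J, a * x ∈ J ∧ x * a ∈ J)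
    (hIle : I ≤ ps.degreeGE 2) (hJle : J ≤ ps.degreeGE 2) :
    (∃ (B : AlgPkg k) (f g : A →ₐ[k] B.carrier),
        Function.Surjective f ∧ Function.Surjective g ∧
        (∀ x : A, f x = 0 ↔ x ∈ I) ∧ (∀ x : A, g x = 0 ↔ x ∈ J) ∧
        ∀ i : V, f (ps.idem i) = g (ps.idem i)) ↔
      ∃ σ : A ≃ₐ[k] A, (∀ i : V, σ (ps.idem i) = ps.idem i) ∧
        Submodule.map σ.toLinearMap I = J :=
  quotients_isomorphic_iff_exists_automorphism_general k V Q A ps hQ I J hJ hIle hJle
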